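/- arXiv:2307.03071 — 4 statements merged into one kernel-verified Lean document; each statement's English description precedes it below -/
import Mathlib

section
/- For every data exchange setting S and source instance I, the set of supported solutions of I w.r.t. S is empty if and only if the set of classical solutions of I w.r.t. S is empty. -/
namespace DE

abbrev Var := ℕ

inductive Term (C : Type) where
  | const : C → Term C
  | null : ℕ → Term C

structure Atom (R C : Type) where
  rel : R
  args : List (Var ⊕ C)

structure Fact (R C : Type) where
  rel : R
  args : List (Term C)

abbrev Instance (R C : Type) := Set (Fact R C)

def termOf {C : Type} (h : Var → Term C) : Var ⊕ C → Term C
  | Sum.inl v => h v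
  | Sum.inr c => Term.const c

def applyAtom {R C : Type} (h : Var → Term C) (a : Atom R C) : Fact R C :=
  ⟨a.rel, a.args.map (termOf h)⟩

/-- `h` maps every atom of `as` into the instance `I`. -/
def holdsBody {R C : Type} (I : Instance R C) (h : Var → Term C)
    (as : List (Atom R C)) : Prop :=
  ∀ a ∈ as, applyAtom h a ∈ I

/-- A tuple-generating dependency. -/
structure TGD (R C : Type) where
  body : List (Atom R C)
  head : List (Atom R C)
  frontier : List Var
  exvars : List Var

def varsOf {R C : Type} (as : List (Atom R C)) : Set Var :=
  {v | ∃ a ∈ as, (Sum.inl v : Var ⊕ C) ∈ a.args}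

/-- Well-formedness of a TGD: frontier variables occur in the body, existential
variables do not, and every head variable is a frontier or existential variable. -/
def TGD.wf {R C : Type} (ρ : TGD R C) : Prop :=
  (∀ v ∈ ρ.frontier, v ∈ varsOf ρ.body) ∧
  (∀ z ∈ ρ.exvars, z ∉ varsOf ρ.body) ∧
  (∀ v ∈ varsOf ρ.head, v ∈ ρ.frontier ∨ v ∈ ρ.exvars)

/-- Satisfaction of a TGD by an instance. -/
def satTGD {R C : Type} (I : Instance R C) (ρ : TGD R C) : Prop :=
  ∀ h : Var → Term C, holdsBody I h ρ.body →
    ∃ h' : Var → Term C, (∀ v ∈ varsOf ρ.body, h' v = h v) ∧ holdsBody I h' ρ.head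

/-- An equality-generating dependency. -/
structure EGD (R C : Type) where
  body : List (Atom R C)
  lhs : Var
  rhs : Var

def satEGD {R C : Type} (I : Instance R C) (η : EGD R C) : Prop :=
  ∀ h : Var → Term C, holdsBody I h η.body → h η.lhs = h η.rhs

/-- An ex-choice: given a TGD and a tuple of constants for its frontier,
a constant for each existential variable. -/
abbrev ExChoice (R C : Type) := TGD R C → List C → Var → C

def constHom {C : Type} (h : Var → C) : Var → Term C := fun v => Term.const (h v)

/-- `I` satisfies all ground versions of the TGD `ρ` that are coherent with `γ`. -/
def satTGDcoh {R C : Type} (I : Instance R C) (γ : ExChoice R C) (ρ : TGD R C) : Prop :=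
  ∀ h : Var → C, (∀ z ∈ ρ.exvars, h z = γ ρ (ρ.frontier.map h) z) →
    holdsBody I (constHom h) ρ.body → holdsBody I (constHom h) ρ.head

/-- A data exchange setting: source-to-target TGDs, target TGDs, target EGDs. -/
structure Setting (R C : Type) where
  sigmaST : List (TGD R C)
  sigmaT : List (TGD R C)
  sigmaE : List (EGD R C)

def Setting.wf {R C : Type} (S : Setting R C) : Prop :=
  ∀ ρ ∈ S.sigmaST ++ S.sigmaT, ρ.wf

/-- Classical solution: `I ∪ J` satisfies `Σst` and `J` satisfies `Σt`. -/
def classicalSolution {R C : Type} (S : Setting R C) (I J : Instance R C) : Prop :=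
  J.Finite ∧ (∀ ρ ∈ S.sigmaST, satTGD (I ∪ J) ρ) ∧
    (∀ ρ ∈ S.sigmaT, satTGD J ρ) ∧ (∀ η ∈ S.sigmaE, satEGD J η)

def supportedWith {R C : Type} (S : Setting R C) (γ : ExChoice R C)
    (I J : Instance R C) : Prop :=
  (∀ ρ ∈ S.sigmaST, satTGDcoh (I ∪ J) γ ρ) ∧
    (∀ ρ ∈ S.sigmaT, satTGDcoh J γ ρ) ∧ (∀ η ∈ S.sigmaE, satEGD J η)

/-- Supported solution: for some ex-choice `γ`, `I ∪ J` satisfies `Σst^γ`,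
`J` satisfies `Σt^γ`, and no proper subset of `J` does. -/
def supportedSolution {R C : Type} (S : Setting R C) (I J : Instance R C) : Prop :=
  J.Finite ∧ ∃ γ : ExChoice R C, supportedWith S γ I J ∧
    ∀ J' : Instance R C, J' ⊂ J → ¬ supportedWith S γ I J'

/-- An instance without labeled nulls (a database). -/
def nullFree {R C : Type} (I : Instance R C) : Prop :=
  ∀ f ∈ I, ∀ t ∈ f.args, ∃ c : C, t = Term.const c

end DE

/-!
A supported solution has no nulls: discarding the facts with nulls keeps every coherent ground
version satisfied, since ground heads consist of constants, so minimality rules such facts out.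
Over a null-free instance the ground versions coherent with an ex-choice imply the TGDs
themselves, hence a supported solution is a classical one. Conversely, swapping the nulls of a
classical solution with fresh constants is an isomorphism fixing the source instance and the
dependencies, so it yields a null-free classical solution. Its TGD witnesses, read off for each
frontier tuple, define an ex-choice whose coherent ground versions it satisfies, and a
subset-minimal subinstance doing so is a supported solution.
-/

namespace DE

open Set Function

variable {R C : Type}

lemma applyAtom_congr {h h' : Var → Term C} {a : Atom R C}
    (hv : ∀ v, (Sum.inl v : Var ⊕ C) ∈ a.args → h v = h' v) :
    applyAtom h a = applyAtom h' a := by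
  simp only [applyAtom, Fact.mk.injEq, true_and]
  refine List.map_congr_left fun x hx => ?_
  cases x with
  | inl v => exact hv v hx
  | inr c => rfl

lemma mem_args_applyAtom {h : Var → Term C} {a : Atom R C} {v : Var}
    (hv : (Sum.inl v : Var ⊕ C) ∈ a.args) : h v ∈ (applyAtom h a).args :=
  List.mem_map.2 ⟨_, hv, rfl⟩

lemma holdsBody.mono {K K' : Instance R C} (hK : K ⊆ K') {h : Var → Term C}
    {as : List (Atom R C)} (hb : holdsBody K h as) : holdsBody K' h as :=
  fun a ha => hK (hb a ha)

lemma nullFree_union {I J : Instance R C} (hI : nullFree I) (hJ : nullFree J) :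
    nullFree (I ∪ J) := by
  rintro f (hf | hf)
  exacts [hI f hf, hJ f hf]

lemma exists_eq_const_of_holdsBody {K : Instance R C} (hK : nullFree K) {h : Var → Term C}
    {as : List (Atom R C)} (hb : holdsBody K h as) {v : Var} (hv : v ∈ varsOf as) :
    ∃ c, h v = Term.const c := by
  obtain ⟨a, ha, hva⟩ := hv
  exact hK _ (hb a ha) _ (mem_args_applyAtom hva)

noncomputable def Term.toConst [Nonempty C] : Term C → C
  | .const c => c
  | .null _ => Classical.arbitrary C

section SupportedToClassical

def nullFreePart (K : Instance R C) : Instance R C :=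
  {f ∈ K | ∀ t ∈ f.args, ∃ c, t = Term.const c}

lemma nullFreePart_subset (K : Instance R C) : nullFreePart K ⊆ K := fun _ hf => hf.1

lemma nullFree_nullFreePart (K : Instance R C) : nullFree (nullFreePart K) := fun _ hf => hf.2

lemma holdsBody_constHom_nullFreePart {K : Instance R C} {h : Var → C} {as : List (Atom R C)}
    (hb : holdsBody K (constHom h) as) : holdsBody (nullFreePart K) (constHom h) as := by
  refine fun a ha => ⟨hb a ha, fun t ht => ?_⟩
  obtain ⟨x, -, rfl⟩ := List.mem_map.1 ht
  cases x with
  | inl v => exact ⟨h v, rfl⟩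
  | inr c => exact ⟨c, rfl⟩

lemma satTGDcoh.anti {K K' : Instance R C} (hK' : K' ⊆ K) (hnf : nullFreePart K ⊆ K')
    {γ : ExChoice R C} {ρ : TGD R C} (hK : satTGDcoh K γ ρ) : satTGDcoh K' γ ρ :=
  fun h hcoh hb => (holdsBody_constHom_nullFreePart (hK h hcoh (hb.mono hK'))).mono hnf

lemma satEGD.anti {K K' : Instance R C} (hK' : K' ⊆ K) {η : EGD R C} (hK : satEGD K η) :
    satEGD K' η :=
  fun h hb => hK h (hb.mono hK')

lemma supportedWith_nullFreePart {S : Setting R C} {γ : ExChoice R C} {I J : Instance R C}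
    (hJ : supportedWith S γ I J) : supportedWith S γ I (nullFreePart J) := by
  obtain ⟨hST, hT, hE⟩ := hJ
  refine ⟨fun ρ hρ => (hST ρ hρ).anti (union_subset_union_right I (nullFreePart_subset J)) ?_,
    fun ρ hρ => (hT ρ hρ).anti (nullFreePart_subset J) subset_rfl,
    fun η hη => (hE η hη).anti (nullFreePart_subset J)⟩
  rintro f ⟨hf | hf, hnf⟩
  exacts [Or.inl hf, Or.inr ⟨hf, hnf⟩]

lemma nullFree_of_supportedSolution {S : Setting R C} {I J : Instance R C}
    (hJ : supportedSolution S I J) : nullFree J := by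
  obtain ⟨-, γ, hsw, hmin⟩ := hJ
  have hJ : nullFreePart J = J := by
    by_contra hne
    exact hmin _ (Set.ssubset_iff_subset_ne.2 ⟨nullFreePart_subset J, hne⟩) (supportedWith_nullFreePart hsw)
  exact hJ ▸ nullFree_nullFreePart J

theorem satTGD_of_satTGDcoh [Nonempty C] {K : Instance R C} (hK : nullFree K)
    {γ : ExChoice R C} {ρ : TGD R C} (hρ : ρ.wf) (hcoh : satTGDcoh K γ ρ) : satTGD K ρ := by
  classical
  intro h hb
  set cs := ρ.frontier.map (Term.toConst ∘ h)
  set g : Var → C := fun v => if v ∈ ρ.exvars then γ ρ cs v else (h v).toConst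
  have hfr : ρ.frontier.map g = cs :=
    List.map_congr_left fun v hv => if_neg fun hz => hρ.2.1 v hz (hρ.1 v hv)
  have hbody : ∀ v ∈ varsOf ρ.body, Term.const (g v) = h v := by
    intro v hv
    obtain ⟨c, hc⟩ := exists_eq_const_of_holdsBody hK hb hv
    simp only [g, if_neg fun hz => hρ.2.1 v hz hv, hc, Term.toConst]
  have hb' : holdsBody K (constHom g) ρ.body := fun a ha => by
    rw [show applyAtom (constHom g) a = applyAtom h a from
      applyAtom_congr fun v hv => hbody v ⟨a, ha, hv⟩]
    exact hb a ha
  exact ⟨constHom g, hbody, hcoh g (fun z hz => by rw [hfr]; exact if_pos hz) hb'⟩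

theorem supportedSolution.classicalSolution [Nonempty C] {S : Setting R C} (hS : S.wf)
    {I J : Instance R C} (hI : nullFree I) (hJ : supportedSolution S I J) :
    classicalSolution S I J := by
  have hJnf := nullFree_of_supportedSolution hJ
  obtain ⟨hfin, γ, ⟨hST, hT, hE⟩, -⟩ := hJ
  exact ⟨hfin,
    fun ρ hρ => satTGD_of_satTGDcoh (nullFree_union hI hJnf)
      (hS ρ (List.mem_append_left _ hρ)) (hST ρ hρ),
    fun ρ hρ => satTGD_of_satTGDcoh hJnf (hS ρ (List.mem_append_right _ hρ)) (hT ρ hρ), hE⟩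

end SupportedToClassical

section Renaming

def Fact.map (τ : Term C → Term C) (f : Fact R C) : Fact R C := ⟨f.rel, f.args.map τ⟩

lemma Fact.map_involutive {τ : Term C → Term C} (hτ : Involutive τ) :
    Involutive (Fact.map (R := R) τ) := by
  rintro ⟨r, args⟩
  simp [Fact.map, hτ.comp_self]

lemma Fact.map_eq_self {τ : Term C → Term C} {f : Fact R C} (hf : ∀ t ∈ f.args, τ t = t) :
    Fact.map τ f = f := by
  obtain ⟨r, args⟩ := f
  simp only [Fact.map, Fact.mk.injEq, true_and]
  exact List.map_congr_left hf |>.trans (List.map_id args)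

lemma _root_.Function.Involutive.preimage_eq_self {α : Type*} {φ : α → α} (hφ : Involutive φ)
    {s : Set α} (hs : ∀ x ∈ s, φ x = x) : φ ⁻¹' s = s := by
  ext x
  refine ⟨fun hx => ?_, fun hx => by rw [mem_preimage, hs x hx]; exact hx⟩
  rw [← hφ x, hs _ hx]
  exact hx

def FixesConsts (τ : Term C → Term C) (B : Set C) : Prop :=
  ∀ c ∈ B, τ (Term.const c) = Term.const c

lemma FixesConsts.mono {τ : Term C → Term C} {B B' : Set C} (hB : FixesConsts τ B)
    (hB' : B' ⊆ B) : FixesConsts τ B' :=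
  fun c hc => hB c (hB' hc)

def atomConsts (as : List (Atom R C)) : Set C :=
  {c | ∃ a ∈ as, (Sum.inr c : Var ⊕ C) ∈ a.args}

def constsOf (K : Instance R C) : Set C := {c | ∃ f ∈ K, Term.const c ∈ f.args}

def Setting.consts (S : Setting R C) : Set C :=
  (⋃ ρ ∈ S.sigmaST ++ S.sigmaT, atomConsts ρ.body ∪ atomConsts ρ.head) ∪
    ⋃ η ∈ S.sigmaE, atomConsts η.body

lemma atomConsts_finite (as : List (Atom R C)) : (atomConsts as).Finite := by
  refine ((List.finite_toSet as).biUnion fun a _ =>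
    (List.finite_toSet a.args).preimage Sum.inr_injective.injOn).subset ?_
  rintro c ⟨a, ha, hc⟩
  exact mem_biUnion ha hc

lemma constsOf_finite {K : Instance R C} (hK : K.Finite) : (constsOf K).Finite := by
  refine (hK.biUnion fun f _ =>
    (List.finite_toSet f.args).preimage (Injective.injOn fun _ _ h => Term.const.inj h)).subset ?_
  rintro c ⟨f, hf, hc⟩
  exact mem_biUnion hf hc

lemma Setting.consts_finite (S : Setting R C) : S.consts.Finite :=
  ((List.finite_toSet _).biUnion fun _ _ => (atomConsts_finite _).union (atomConsts_finite _)).union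
    ((List.finite_toSet _).biUnion fun _ _ => atomConsts_finite _)

lemma map_applyAtom {τ : Term C → Term C} {a : Atom R C}
    (hτ : ∀ c, (Sum.inr c : Var ⊕ C) ∈ a.args → τ (Term.const c) = Term.const c)
    (h : Var → Term C) : Fact.map τ (applyAtom h a) = applyAtom (τ ∘ h) a := by
  simp only [Fact.map, applyAtom, List.map_map, Fact.mk.injEq, true_and]
  refine List.map_congr_left fun x hx => ?_
  cases x with
  | inl v => rfl
  | inr c => exact hτ c hx

lemma holdsBody_preimage_map {τ : Term C → Term C} {as : List (Atom R C)}
    (hτ : FixesConsts τ (atomConsts as)) {K : Instance R C} {h : Var → Term C} :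
    holdsBody (Fact.map τ ⁻¹' K) h as ↔ holdsBody K (τ ∘ h) as :=
  forall₂_congr fun a ha => by
    rw [mem_preimage, map_applyAtom fun c hc => hτ c ⟨a, ha, hc⟩]

lemma satTGD.preimage_map {τ : Term C → Term C} (hτ : Involutive τ) {ρ : TGD R C}
    (hfix : FixesConsts τ (atomConsts ρ.body ∪ atomConsts ρ.head)) {K : Instance R C}
    (hK : satTGD K ρ) : satTGD (Fact.map τ ⁻¹' K) ρ := by
  intro h hb
  obtain ⟨h', hagree, hhead⟩ :=
    hK (τ ∘ h) ((holdsBody_preimage_map (hfix.mono subset_union_left)).1 hb)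
  refine ⟨τ ∘ h', fun v hv => ?_, (holdsBody_preimage_map (hfix.mono subset_union_right)).2 ?_⟩
  · rw [comp_apply, hagree v hv, comp_apply, hτ]
  · rwa [← comp_assoc, hτ.comp_self, id_comp]

lemma satEGD.preimage_map {τ : Term C → Term C} (hτ : Injective τ) {η : EGD R C}
    (hfix : FixesConsts τ (atomConsts η.body)) {K : Instance R C} (hK : satEGD K η) :
    satEGD (Fact.map τ ⁻¹' K) η :=
  fun h hb => hτ (hK (τ ∘ h) ((holdsBody_preimage_map hfix).1 hb))

lemma classicalSolution.preimage_map {S : Setting R C} {I J : Instance R C}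
    {τ : Term C → Term C} (hτ : Involutive τ) (hI : ∀ f ∈ I, Fact.map τ f = f)
    (hfix : FixesConsts τ S.consts) (hJ : classicalSolution S I J) :
    classicalSolution S I (Fact.map τ ⁻¹' J) := by
  obtain ⟨hfin, hST, hT, hE⟩ := hJ
  have hfixρ : ∀ ρ ∈ S.sigmaST ++ S.sigmaT,
      FixesConsts τ (atomConsts ρ.body ∪ atomConsts ρ.head) := fun ρ hρ =>
    hfix.mono (subset_union_left.trans' (subset_iUnion₂ (s := fun ρ (_ : ρ ∈ _) =>
      atomConsts ρ.body ∪ atomConsts ρ.head) ρ hρ))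
  have hIJ : I ∪ Fact.map τ ⁻¹' J = Fact.map τ ⁻¹' (I ∪ J) := by
    rw [preimage_union, (Fact.map_involutive hτ).preimage_eq_self hI]
  refine ⟨hfin.preimage (Fact.map_involutive hτ).injective.injOn,
    fun ρ hρ => hIJ ▸ (hST ρ hρ).preimage_map hτ (hfixρ ρ (List.mem_append_left _ hρ)),
    fun ρ hρ => (hT ρ hρ).preimage_map hτ (hfixρ ρ (List.mem_append_right _ hρ)),
    fun η hη => (hE η hη).preimage_map hτ.injective (hfix.mono ?_)⟩
  exact subset_union_right.trans' (subset_iUnion₂ (s := fun η (_ : η ∈ S.sigmaE) =>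
    atomConsts η.body) η hη)

lemma nullFree_preimage_map {τ : Term C → Term C} (hτ : Involutive τ) {K : Instance R C}
    (hfix : FixesConsts τ (constsOf K)) (hnull : ∀ n, ∃ c, τ (Term.null n) = Term.const c) :
    nullFree (Fact.map τ ⁻¹' K) := by
  intro f hf t ht
  have hτt : τ t ∈ (Fact.map τ f).args := List.mem_map_of_mem ht
  rw [← hτ t]
  cases h : τ t with
  | const c => exact ⟨c, hfix c ⟨_, hf, h ▸ hτt⟩⟩
  | null n => exact hnull n

open Classical in
noncomputable def swapNulls (e : ℕ → C) : Term C → Term C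
  | .null n => .const (e n)
  | .const c => if h : ∃ n, e n = c then .null h.choose else .const c

lemma swapNulls_involutive {e : ℕ → C} (he : Injective e) : Involutive (swapNulls e) := by
  rintro (c | n)
  · by_cases h : ∃ n, e n = c
    · simp only [swapNulls, dif_pos h, h.choose_spec]
    · simp only [swapNulls, dif_neg h]
  · have h : ∃ m, e m = e n := ⟨n, rfl⟩
    simp only [swapNulls, dif_pos h, he h.choose_spec]

lemma exists_renaming [Infinite C] {B : Set C} (hB : B.Finite) :
    ∃ τ : Term C → Term C, Involutive τ ∧ FixesConsts τ B ∧
      ∀ n, ∃ c, τ (Term.null n) = Term.const c := by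
  let e : ℕ ↪ ↥Bᶜ := hB.infinite_compl.natEmbedding
  refine ⟨swapNulls fun n => (e n : C), swapNulls_involutive (Subtype.val_injective.comp e.injective),
    fun c hc => dif_neg ?_, fun n => ⟨_, rfl⟩⟩
  rintro ⟨n, rfl⟩
  exact (e n).2 hc

theorem classicalSolution.exists_nullFree [Infinite C] {S : Setting R C} {I J : Instance R C}
    (hI : nullFree I) (hIfin : I.Finite) (hJ : classicalSolution S I J) :
    ∃ J₀, classicalSolution S I J₀ ∧ nullFree J₀ := by
  obtain ⟨τ, hτ, hfix, hnull⟩ := exists_renaming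
    (((constsOf_finite hIfin).union (constsOf_finite hJ.1)).union S.consts_finite)
  refine ⟨Fact.map τ ⁻¹' J, hJ.preimage_map hτ (fun f hf => Fact.map_eq_self fun t ht => ?_)
    (hfix.mono subset_union_right),
    nullFree_preimage_map hτ (hfix.mono (subset_union_right.trans subset_union_left)) hnull⟩
  obtain ⟨c, rfl⟩ := hI f hf t ht
  exact hfix c (Or.inl (Or.inl ⟨f, hf, ht⟩))

end Renaming

section ClassicalToSupported

def IsExWitness (K : Instance R C) (ρ : TGD R C) (cs : List C) (e : Var → C) : Prop :=
  ∀ h : Var → C, ρ.frontier.map h = cs → (∀ z ∈ ρ.exvars, h z = e z) →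
    holdsBody K (constHom h) ρ.head

lemma IsExWitness.mono {K K' : Instance R C} (hK : K ⊆ K') {ρ : TGD R C} {cs : List C}
    {e : Var → C} (hw : IsExWitness K ρ cs e) : IsExWitness K' ρ cs e :=
  fun h hcs hz => (hw h hcs hz).mono hK

lemma exists_isExWitness [Nonempty C] {K : Instance R C} (hK : nullFree K) {ρ : TGD R C}
    (hρ : ρ.wf) (hsat : satTGD K ρ) {g : Var → C} (hg : holdsBody K (constHom g) ρ.body) :
    ∃ e, IsExWitness K ρ (ρ.frontier.map g) e := by
  obtain ⟨h', hagree, hhead⟩ := hsat (constHom g) hg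
  refine ⟨Term.toConst ∘ h', fun h hcs hz a ha => ?_⟩
  suffices applyAtom (constHom h) a = applyAtom h' a from this ▸ hhead a ha
  refine applyAtom_congr fun v hv => ?_
  rcases hρ.2.2 v ⟨a, ha, hv⟩ with hfr | hex
  · rw [hagree v (hρ.1 v hfr)]
    simp only [constHom, List.map_inj_left.1 hcs v hfr]
  · obtain ⟨c, hc⟩ := hK _ (hhead a ha) _ (mem_args_applyAtom hv)
    simp only [constHom, hz v hex, comp_apply, hc, Term.toConst]

open Classical in
/-- Witnesses in `K₁` are preferred: they stay witnesses in any `K₂ ⊇ K₁`, so one ex-choice serves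
a TGD that is both source-to-target (checked in `I ∪ J`) and target (checked in `J`). -/
noncomputable def exChoiceOf [Nonempty C] (K₁ K₂ : Instance R C) : ExChoice R C := fun ρ cs =>
  if h₁ : ∃ e, IsExWitness K₁ ρ cs e then h₁.choose
  else if h₂ : ∃ e, IsExWitness K₂ ρ cs e then h₂.choose
  else fun _ => Classical.arbitrary C

lemma isExWitness_exChoiceOf_left [Nonempty C] {K₁ K₂ : Instance R C} {ρ : TGD R C}
    {cs : List C} (h : ∃ e, IsExWitness K₁ ρ cs e) :
    IsExWitness K₁ ρ cs (exChoiceOf K₁ K₂ ρ cs) := by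
  rw [exChoiceOf, dif_pos h]
  exact h.choose_spec

lemma isExWitness_exChoiceOf_right [Nonempty C] {K₁ K₂ : Instance R C} {ρ : TGD R C}
    {cs : List C} (hK : K₁ ⊆ K₂) (h : ∃ e, IsExWitness K₂ ρ cs e) :
    IsExWitness K₂ ρ cs (exChoiceOf K₁ K₂ ρ cs) := by
  by_cases h₁ : ∃ e, IsExWitness K₁ ρ cs e
  · rw [exChoiceOf, dif_pos h₁]
    exact h₁.choose_spec.mono hK
  · rw [exChoiceOf, dif_neg h₁, dif_pos h]
    exact h.choose_spec

lemma satTGDcoh_of_isExWitness {K : Instance R C} {γ : ExChoice R C} {ρ : TGD R C}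
    (hw : ∀ g : Var → C, holdsBody K (constHom g) ρ.body →
      IsExWitness K ρ (ρ.frontier.map g) (γ ρ (ρ.frontier.map g))) :
    satTGDcoh K γ ρ :=
  fun h hz hb => hw h hb h rfl hz

theorem classicalSolution.supportedWith [Nonempty C] {S : Setting R C} (hS : S.wf)
    {I J : Instance R C} (hI : nullFree I) (hJnf : nullFree J) (hJ : classicalSolution S I J) :
    supportedWith S (exChoiceOf J (I ∪ J)) I J := by
  obtain ⟨-, hST, hT, hE⟩ := hJ
  refine ⟨fun ρ hρ => satTGDcoh_of_isExWitness fun g hg => ?_,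
    fun ρ hρ => satTGDcoh_of_isExWitness fun g hg => ?_, hE⟩
  · exact isExWitness_exChoiceOf_right subset_union_right <| exists_isExWitness
      (nullFree_union hI hJnf) (hS ρ (List.mem_append_left _ hρ)) (hST ρ hρ) hg
  · exact isExWitness_exChoiceOf_left <|
      exists_isExWitness hJnf (hS ρ (List.mem_append_right _ hρ)) (hT ρ hρ) hg

theorem exists_supportedSolution_subset {S : Setting R C} {γ : ExChoice R C}
    {I J : Instance R C} (hJfin : J.Finite) (hJ : supportedWith S γ I J) :
    ∃ J' ⊆ J, supportedSolution S I J' := by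
  have hfin : {K | K ⊆ J ∧ supportedWith S γ I K}.Finite :=
    hJfin.finite_subsets.subset fun _ hK => hK.1
  obtain ⟨J', hJ'J, hmin⟩ := hfin.exists_le_minimal ⟨subset_rfl, hJ⟩
  exact ⟨J', hJ'J, hJfin.subset hJ'J, γ, hmin.prop.2,
    fun K hK hKsw => hmin.not_lt ⟨hK.le.trans hJ'J, hKsw⟩ hK⟩

theorem classicalSolution.exists_supportedSolution [Infinite C] {S : Setting R C} (hS : S.wf)
    {I J : Instance R C} (hI : nullFree I) (hIfin : I.Finite) (hJ : classicalSolution S I J) :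
    ∃ J', supportedSolution S I J' := by
  obtain ⟨J₀, hJ₀, hJ₀nf⟩ := hJ.exists_nullFree hI hIfin
  obtain ⟨J', -, hJ'⟩ := exists_supportedSolution_subset hJ₀.1 (hJ₀.supportedWith hS hI hJ₀nf)
  exact ⟨J', hJ'⟩

end ClassicalToSupported

end DE

/-- the set of supported solutions is empty iff the set of
classical solutions is empty. -/
theorem ssol_empty_iff_sol_empty {R C : Type} [Infinite C]
    (S : DE.Setting R C) (hS : S.wf)
    (I : DE.Instance R C) (hInf : DE.nullFree I) (hIfin : I.Finite) :
    ({J : DE.Instance R C | DE.supportedSolution S I J} = ∅ ↔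
      {J : DE.Instance R C | DE.classicalSolution S I J} = ∅) := by
  simp only [Set.eq_empty_iff_forall_notMem, Set.mem_ofPred_eq, ← not_exists]
  exact not_congr ⟨fun ⟨J, hJ⟩ => ⟨J, hJ.classicalSolution hS hInf⟩,
    fun ⟨_, hJ⟩ => hJ.exists_supportedSolution hS hInf hIfin⟩
end

section
/- A graph G = (V,E) admits a proper 3-coloring if and only if there exists a supported solution J of the source instance I_G w.r.t. the setting S (with Σ_st = {Col(x) → Col_t(x), E_s(x,y) → E_t(x,y), V(x) → ∃z HasC(x,z)} and Σ_t = ∅) such that the Boolean query Q = Q1 ∨ Q2 is false on J, where Q1 = ∃x,y (HasC(x,y) ∧ ¬Col_t(y)) and Q2 = ∃x,y,z (E_t(x,y) ∧ HasC(x,z) ∧ HasC(y,z)). -/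
inductive GRel : Type
  | V | Es | Col | ColT | Et | HasC

namespace ThreeCol

def rho1 (C : Type) : DE.TGD GRel C :=
  ⟨[⟨GRel.Col, [Sum.inl 0]⟩], [⟨GRel.ColT, [Sum.inl 0]⟩], [0], []⟩

def rho2 (C : Type) : DE.TGD GRel C :=
  ⟨[⟨GRel.Es, [Sum.inl 0, Sum.inl 1]⟩], [⟨GRel.Et, [Sum.inl 0, Sum.inl 1]⟩], [0, 1], []⟩

def rho3 (C : Type) : DE.TGD GRel C :=
  ⟨[⟨GRel.V, [Sum.inl 0]⟩], [⟨GRel.HasC, [Sum.inl 0, Sum.inl 1]⟩], [0], [1]⟩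

def setting (C : Type) : DE.Setting GRel C := ⟨[rho1 C, rho2 C, rho3 C], [], []⟩

/-- The source instance `I_G` encoding the graph `(Vtx, E)` and the three colors. -/
def IG {Vtx C : Type} (E : Vtx → Vtx → Prop) (emb : Vtx → C) (r g b : C) :
    DE.Instance GRel C :=
  {f | (∃ v, f = ⟨GRel.V, [DE.Term.const (emb v)]⟩) ∨
       (∃ u v, E u v ∧ f = ⟨GRel.Es, [DE.Term.const (emb u), DE.Term.const (emb v)]⟩) ∨
       f = ⟨GRel.Col, [DE.Term.const r]⟩ ∨
       f = ⟨GRel.Col, [DE.Term.const g]⟩ ∨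
       f = ⟨GRel.Col, [DE.Term.const b]⟩}

/-- `Q1`: some node has a "color" that is not one of the copied colors. -/
def Q1 {C : Type} (J : DE.Instance GRel C) : Prop :=
  ∃ x y : DE.Term C, (⟨GRel.HasC, [x, y]⟩ : DE.Fact GRel C) ∈ J ∧
    (⟨GRel.ColT, [y]⟩ : DE.Fact GRel C) ∉ J

/-- `Q2`: the two endpoints of some edge share a color. -/
def Q2 {C : Type} (J : DE.Instance GRel C) : Prop :=
  ∃ x y z : DE.Term C, (⟨GRel.Et, [x, y]⟩ : DE.Fact GRel C) ∈ J ∧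
    (⟨GRel.HasC, [x, z]⟩ : DE.Fact GRel C) ∈ J ∧
    (⟨GRel.HasC, [y, z]⟩ : DE.Fact GRel C) ∈ J

/-- The target instance induced by a coloring `μ`. -/
def Jsol {Vtx C : Type} (E : Vtx → Vtx → Prop) (emb : Vtx → C) (r g b : C)
    (μ : Vtx → C) : DE.Instance GRel C :=
  {f | (∃ v, f = ⟨GRel.HasC, [DE.Term.const (emb v), DE.Term.const (μ v)]⟩) ∨
       (∃ u v, E u v ∧ f = ⟨GRel.Et, [DE.Term.const (emb u), DE.Term.const (emb v)]⟩) ∨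
       f = ⟨GRel.ColT, [DE.Term.const r]⟩ ∨
       f = ⟨GRel.ColT, [DE.Term.const g]⟩ ∨
       f = ⟨GRel.ColT, [DE.Term.const b]⟩}

end ThreeCol

/-!
The setting has no target dependencies and its TGD bodies only read source relations, which
`I_G` alone supplies. Hence, for a fixed ex-choice `γ`, the facts forced by the coherent ground
TGDs do not depend on `J`: they form the `γ`-chase of `I_G`, which is contained in every
`γ`-supported `J` and is itself `γ`-supported, so minimality makes it the unique supported
solution for `γ`. For this setting the chase copies the edges and the three colours and gives
each node `v` the value `γ(v)` chosen for `z`; `¬Q1` then says each `γ(v)` is one of `r, g, b`,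
and `¬Q2` that adjacent nodes receive different values.
-/

namespace DE

variable {R C : Type}

def triggered (I : Instance R C) (γ : ExChoice R C) (ρ : TGD R C) : Instance R C :=
  {f | ∃ h : Var → C, (∀ z ∈ ρ.exvars, h z = γ ρ (ρ.frontier.map h) z) ∧
    holdsBody I (constHom h) ρ.body ∧ ∃ a ∈ ρ.head, f = applyAtom (constHom h) a}

def chase (S : Setting R C) (γ : ExChoice R C) (I : Instance R C) : Instance R C :=
  ⋃ ρ ∈ S.sigmaST, triggered I γ ρ

def Setting.IsSourceToTarget (S : Setting R C) (src : Set R) : Prop :=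
  S.sigmaT = [] ∧ S.sigmaE = [] ∧
    ∀ ρ ∈ S.sigmaST, (∀ a ∈ ρ.body, a.rel ∈ src) ∧ ∀ a ∈ ρ.head, a.rel ∉ src

theorem satTGDcoh_iff_triggered_subset {I : Instance R C} {γ : ExChoice R C}
    {ρ : TGD R C} : satTGDcoh I γ ρ ↔ triggered I γ ρ ⊆ I := by
  constructor
  · rintro hI f ⟨h, hcoh, hbody, a, ha, rfl⟩
    exact hI h hcoh hbody a ha
  · intro hI h hcoh hbody a ha
    exact hI ⟨h, hcoh, hbody, a, ha, rfl⟩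

theorem triggered_mono {I I' : Instance R C} (hII' : I ⊆ I') (γ : ExChoice R C)
    (ρ : TGD R C) : triggered I γ ρ ⊆ triggered I' γ ρ := by
  rintro f ⟨h, hcoh, hbody, hf⟩
  exact ⟨h, hcoh, fun a ha => hII' (hbody a ha), hf⟩

theorem triggered_union_of_rel_not_mem {src : Set R} {I K : Instance R C}
    {γ : ExChoice R C} {ρ : TGD R C} (hbody : ∀ a ∈ ρ.body, a.rel ∈ src)
    (hK : ∀ f ∈ K, f.rel ∉ src) : triggered (I ∪ K) γ ρ = triggered I γ ρ := by
  refine (triggered_mono Set.subset_union_left γ ρ).antisymm' ?_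
  rintro f ⟨h, hcoh, hIK, hf⟩
  refine ⟨h, hcoh, fun a ha => ?_, hf⟩
  exact (hIK a ha).resolve_right fun hmem => hK _ hmem (hbody a ha)

section SourceToTarget

variable {S : Setting R C} {src : Set R} {I : Instance R C}

theorem Setting.IsSourceToTarget.rel_not_mem_of_mem_chase (hS : S.IsSourceToTarget src)
    {γ : ExChoice R C} {f : Fact R C} (hf : f ∈ chase S γ I) : f.rel ∉ src := by
  simp only [chase, Set.mem_iUnion] at hf
  obtain ⟨ρ, hρ, h, -, -, a, ha, rfl⟩ := hf
  exact (hS.2.2 ρ hρ).2 a ha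

theorem Setting.IsSourceToTarget.chase_subset (hS : S.IsSourceToTarget src)
    (hI : ∀ f ∈ I, f.rel ∈ src) {γ : ExChoice R C} {J : Instance R C}
    (hJ : supportedWith S γ I J) : chase S γ I ⊆ J := by
  intro f hf
  obtain ⟨ρ, hρ, hfρ⟩ := Set.mem_iUnion₂.mp hf
  have hIJ : f ∈ I ∪ J := satTGDcoh_iff_triggered_subset.mp (hJ.1 ρ hρ)
    (triggered_mono Set.subset_union_left γ ρ hfρ)
  exact hIJ.resolve_left fun hfI => hS.rel_not_mem_of_mem_chase hf (hI f hfI)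

theorem Setting.IsSourceToTarget.supportedWith_chase (hS : S.IsSourceToTarget src)
    (γ : ExChoice R C) : supportedWith S γ I (chase S γ I) := by
  refine ⟨fun ρ hρ => ?_, by simp [hS.1], by simp [hS.2.1]⟩
  rw [satTGDcoh_iff_triggered_subset, triggered_union_of_rel_not_mem (hS.2.2 ρ hρ).1
    fun f hf => hS.rel_not_mem_of_mem_chase hf]
  exact (Set.subset_biUnion_of_mem (u := fun ρ => triggered I γ ρ) hρ).trans
    Set.subset_union_right

theorem Setting.IsSourceToTarget.supportedSolution_iff (hS : S.IsSourceToTarget src)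
    (hI : ∀ f ∈ I, f.rel ∈ src) {J : Instance R C} :
    supportedSolution S I J ↔ J.Finite ∧ ∃ γ, J = chase S γ I := by
  constructor
  · rintro ⟨hfin, γ, hJ, hmin⟩
    refine ⟨hfin, γ, (hS.chase_subset hI hJ).eq_or_ssubset.elim Eq.symm fun hlt => ?_⟩
    exact (hmin _ hlt (hS.supportedWith_chase γ)).elim
  · rintro ⟨hfin, γ, rfl⟩
    exact ⟨hfin, γ, hS.supportedWith_chase γ, fun J' hJ' hsup =>
      hJ'.not_subset (hS.chase_subset hI hsup)⟩

end SourceToTarget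

end DE

namespace ThreeCol

open DE

variable {Vtx C : Type} {E : Vtx → Vtx → Prop} {emb : Vtx → C} {r g b : C}

theorem setting_isSourceToTarget :
    (setting C).IsSourceToTarget {GRel.V, GRel.Es, GRel.Col} := by
  simp [Setting.IsSourceToTarget, setting, rho1, rho2, rho3]

theorem rel_mem_of_mem_IG {f : Fact GRel C} (hf : f ∈ IG E emb r g b) :
    f.rel ∈ ({GRel.V, GRel.Es, GRel.Col} : Set GRel) := by
  rcases hf with ⟨v, rfl⟩ | ⟨u, v, -, rfl⟩ | rfl | rfl | rfl <;> simp

theorem triggered_IG_rho1 (γ : ExChoice GRel C) :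
    triggered (IG E emb r g b) γ (rho1 C) =
      {⟨GRel.ColT, [Term.const r]⟩, ⟨GRel.ColT, [Term.const g]⟩,
        ⟨GRel.ColT, [Term.const b]⟩} := by
  ext f
  simp only [triggered, rho1, List.not_mem_nil, List.map_cons, List.map_nil, IsEmpty.forall_iff,
    implies_true, holdsBody, List.mem_cons, or_false, IG, applyAtom, Set.mem_ofPred_eq,
    Fact.mk.injEq, List.map_eq_singleton_iff, termOf, constHom, Sum.exists, Term.const.injEq,
    exists_eq_right, exists_and_left, forall_eq, reduceCtorEq, List.cons.injEq, Sum.inl.injEq,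
    and_true, exists_eq_left', false_and, List.ne_cons_self, and_false, and_self, exists_false,
    true_and, false_or, exists_eq_left, Set.mem_insert_iff, Set.mem_singleton_iff]
  constructor
  · rintro ⟨h, hc | hc | hc, rfl⟩ <;> simp [hc]
  · rintro (rfl | rfl | rfl) <;> exact ⟨fun _ => _, by simp, rfl⟩

theorem triggered_IG_rho2 (γ : ExChoice GRel C) :
    triggered (IG E emb r g b) γ (rho2 C) =
      {f | ∃ u v, E u v ∧ f = ⟨GRel.Et, [Term.const (emb u), Term.const (emb v)]⟩} := by
  ext f
  simp only [triggered, rho2, List.not_mem_nil, List.map_cons, List.map_nil, IsEmpty.forall_iff,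
    implies_true, holdsBody, List.mem_cons, or_false, IG, applyAtom, Set.mem_ofPred_eq,
    Fact.mk.injEq, List.map_eq_singleton_iff, termOf, constHom, Sum.exists, Term.const.injEq,
    exists_eq_right, exists_and_left, forall_eq, reduceCtorEq, List.cons.injEq, Sum.inl.injEq,
    List.cons_ne_self, and_false, false_and, exists_const, and_self, or_self, exists_false,
    and_true, true_and, false_or, exists_eq_left]
  constructor
  · rintro ⟨h, ⟨u, v, huv, hu, hv⟩, rfl⟩
    exact ⟨u, v, huv, by rw [hu, hv]⟩
  · rintro ⟨u, v, huv, rfl⟩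
    exact ⟨fun n => if n = 0 then emb u else emb v, ⟨u, v, huv, rfl, rfl⟩, rfl⟩

theorem triggered_IG_rho3 (γ : ExChoice GRel C) :
    triggered (IG E emb r g b) γ (rho3 C) =
      {f | ∃ v, f = ⟨GRel.HasC, [Term.const (emb v), Term.const (γ (rho3 C) [emb v] 1)]⟩} := by
  ext f
  simp only [triggered, rho3, List.mem_cons, List.not_mem_nil, or_false, List.map_cons,
    List.map_nil, forall_eq, holdsBody, IG, applyAtom, Set.mem_ofPred_eq, Fact.mk.injEq,
    List.map_eq_singleton_iff, termOf, constHom, Sum.exists, Term.const.injEq, exists_eq_right,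
    exists_and_left, List.cons.injEq, Sum.inl.injEq, and_true, exists_eq_left', reduceCtorEq,
    true_and, List.ne_cons_self, and_false, and_self, exists_false, false_and, or_self,
    exists_eq_left]
  constructor
  · rintro ⟨h, h1, ⟨v, hv⟩, rfl⟩
    exact ⟨v, by rw [h1, hv]⟩
  · rintro ⟨v, rfl⟩
    exact ⟨fun n => if n = 0 then emb v else γ _ [emb v] 1, rfl, ⟨v, rfl⟩, rfl⟩

theorem chase_setting_IG (γ : ExChoice GRel C) :
    chase (setting C) γ (IG E emb r g b) = Jsol E emb r g b (fun v => γ (rho3 C) [emb v] 1) := by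
  ext f
  simp only [chase, setting, List.mem_cons, List.not_mem_nil, or_false, Set.mem_iUnion,
    exists_prop, exists_eq_or_imp, exists_eq_left, triggered_IG_rho1, triggered_IG_rho2,
    triggered_IG_rho3, Jsol, Set.mem_ofPred_eq, Set.mem_insert_iff, Set.mem_singleton_iff]
  ac_nf

variable {μ : Vtx → C}

theorem Jsol_finite [Finite Vtx] : (Jsol E emb r g b μ).Finite := by
  refine (((Set.finite_range fun v => (⟨GRel.HasC, [Term.const (emb v), Term.const (μ v)]⟩ :
    Fact GRel C)).union (Set.finite_range fun p : Vtx × Vtx =>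
      (⟨GRel.Et, [Term.const (emb p.1), Term.const (emb p.2)]⟩ : Fact GRel C))).union
    (Set.toFinite {⟨GRel.ColT, [Term.const r]⟩, ⟨GRel.ColT, [Term.const g]⟩,
      ⟨GRel.ColT, [Term.const b]⟩})).subset ?_
  rintro f (⟨v, rfl⟩ | ⟨u, v, -, rfl⟩ | hf)
  · exact Or.inl (Or.inl ⟨v, rfl⟩)
  · exact Or.inl (Or.inr ⟨(u, v), rfl⟩)
  · exact Or.inr hf

theorem not_Q1_Jsol_iff : ¬ Q1 (Jsol E emb r g b μ) ↔ ∀ v, μ v = r ∨ μ v = g ∨ μ v = b := by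
  simp [Q1, Jsol, or_iff_not_imp_left]

theorem not_Q2_Jsol_iff (hemb : Function.Injective emb) :
    ¬ Q2 (Jsol E emb r g b μ) ↔ ∀ u v, E u v → μ u ≠ μ v := by
  simp [Q2, Jsol, hemb.eq_iff]

theorem exists_exChoice_rho3 [Nonempty C] (hemb : Function.Injective emb) (μ : Vtx → C) :
    ∃ γ : ExChoice GRel C, ∀ v, γ (rho3 C) [emb v] 1 = μ v :=
  ⟨fun _ l _ => Function.extend (fun v => [emb v]) μ (fun _ => Classical.arbitrary C) l,
    fun v => (List.singleton_injective.comp hemb).extend_apply μ _ v⟩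

end ThreeCol

open ThreeCol in
theorem three_colorable_iff_supported_solution_falsifies_general {Vtx C : Type} [Fintype Vtx]
    (E : Vtx → Vtx → Prop) (emb : Vtx → C) (hemb : Function.Injective emb)
    (r g b : C) :
    (∃ μ : Vtx → C, (∀ v, μ v = r ∨ μ v = g ∨ μ v = b) ∧
        ∀ u v, E u v → μ u ≠ μ v) ↔
      ∃ J : DE.Instance GRel C,
        DE.supportedSolution (setting C) (IG E emb r g b) J ∧ ¬ Q1 J ∧ ¬ Q2 J := by
  rw [exists_congr fun J => and_congr_left' <|
    setting_isSourceToTarget.supportedSolution_iff fun _ => rel_mem_of_mem_IG]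
  constructor
  · rintro ⟨μ, hcolors, hproper⟩
    have : Nonempty C := ⟨r⟩
    obtain ⟨γ, hγ⟩ := exists_exChoice_rho3 hemb μ
    have hchase : DE.chase (setting C) γ (IG E emb r g b) = Jsol E emb r g b μ := by
      rw [chase_setting_IG, funext hγ]
    exact ⟨_, ⟨Jsol_finite, γ, hchase.symm⟩, not_Q1_Jsol_iff.2 hcolors,
      (not_Q2_Jsol_iff hemb).2 hproper⟩
  · rintro ⟨_, ⟨-, γ, rfl⟩, hQ1, hQ2⟩
    rw [chase_setting_IG] at hQ1 hQ2
    exact ⟨_, not_Q1_Jsol_iff.1 hQ1, (not_Q2_Jsol_iff hemb).1 hQ2⟩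

open ThreeCol in
/-- `G` is 3-colorable iff some supported solution of `I_G`
falsifies the query `Q = Q1 ∨ Q2`. -/
theorem three_colorable_iff_supported_solution_falsifies {Vtx C : Type} [Fintype Vtx]
    (E : Vtx → Vtx → Prop) (emb : Vtx → C) (hemb : Function.Injective emb)
    (r g b : C) (hrg : r ≠ g) (hrb : r ≠ b) (hgb : g ≠ b)
    (hdisj : ∀ v, emb v ≠ r ∧ emb v ≠ g ∧ emb v ≠ b) :
    (∃ μ : Vtx → C, (∀ v, μ v = r ∨ μ v = g ∨ μ v = b) ∧
        ∀ u v, E u v → μ u ≠ μ v) ↔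
      ∃ J : DE.Instance GRel C,
        DE.supportedSolution (setting C) (IG E emb r g b) J ∧ ¬ Q1 J ∧ ¬ Q2 J :=
  three_colorable_iff_supported_solution_falsifies_general E emb hemb r g b
end

section
/- Given a supported solution J = {HasC(v, μ(v)) | v ∈ V} ∪ {E_t(u,v) | (u,v) ∈ E} ∪ {Col_t(r), Col_t(g), Col_t(b)} induced by a proper 3-coloring μ of a graph G = (V,E), the Boolean query Q = (∃x,y HasC(x,y) ∧ ¬Col_t(y)) ∨ (∃x,y,z E_t(x,y) ∧ HasC(x,z) ∧ HasC(y,z)) evaluates to false on J. -/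
namespace ThreeCol

open DE

variable {Vtx C : Type} {E : Vtx → Vtx → Prop} {emb : Vtx → C} {r g b : C} {μ : Vtx → C}

theorem hasC_mem_Jsol_iff {x y : Term C} :
    (⟨GRel.HasC, [x, y]⟩ : Fact GRel C) ∈ Jsol E emb r g b μ ↔
      ∃ v, x = Term.const (emb v) ∧ y = Term.const (μ v) := by
  simp [Jsol]

theorem et_mem_Jsol_iff {x y : Term C} :
    (⟨GRel.Et, [x, y]⟩ : Fact GRel C) ∈ Jsol E emb r g b μ ↔
      ∃ u v, E u v ∧ x = Term.const (emb u) ∧ y = Term.const (emb v) := by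
  simp [Jsol, eq_comm]

theorem colT_mem_Jsol_iff {y : Term C} :
    (⟨GRel.ColT, [y]⟩ : Fact GRel C) ∈ Jsol E emb r g b μ ↔
      y = Term.const r ∨ y = Term.const g ∨ y = Term.const b := by
  simp [Jsol]

theorem not_Q1_Jsol (hμcol : ∀ v, μ v = r ∨ μ v = g ∨ μ v = b) :
    ¬ Q1 (Jsol E emb r g b μ) := by
  rintro ⟨x, y, hxy, hy⟩
  obtain ⟨v, -, rfl⟩ := hasC_mem_Jsol_iff.mp hxy
  rw [colT_mem_Jsol_iff] at hy
  rcases hμcol v with h | h | h <;> simp [h] at hy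

theorem not_Q2_Jsol (hemb : Function.Injective emb) (hμ : ∀ u v, E u v → μ u ≠ μ v) :
    ¬ Q2 (Jsol E emb r g b μ) := by
  rintro ⟨x, y, z, hxy, hxz, hyz⟩
  obtain ⟨u, v, huv, rfl, rfl⟩ := et_mem_Jsol_iff.mp hxy
  obtain ⟨u', hu, rfl⟩ := hasC_mem_Jsol_iff.mp hxz
  obtain ⟨v', hv, hμuv⟩ := hasC_mem_Jsol_iff.mp hyz
  obtain rfl := hemb (Term.const.inj hu)
  obtain rfl := hemb (Term.const.inj hv)
  exact hμ u v huv (Term.const.inj hμuv)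

end ThreeCol

open ThreeCol in
theorem query_false_on_coloring_solution_general {Vtx C : Type}
    (E : Vtx → Vtx → Prop) (emb : Vtx → C) (hemb : Function.Injective emb)
    (r g b : C)
    (μ : Vtx → C) (hμcol : ∀ v, μ v = r ∨ μ v = g ∨ μ v = b)
    (hμ : ∀ u v, E u v → μ u ≠ μ v) :
    ¬ Q1 (Jsol E emb r g b μ) ∧ ¬ Q2 (Jsol E emb r g b μ) :=
  ⟨not_Q1_Jsol hμcol, not_Q2_Jsol hemb hμ⟩

open ThreeCol in
/-- the query `Q = Q1 ∨ Q2` is false on the target instance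
induced by a proper 3-coloring `μ`. -/
theorem query_false_on_coloring_solution {Vtx C : Type}
    (E : Vtx → Vtx → Prop) (emb : Vtx → C) (hemb : Function.Injective emb)
    (r g b : C) (hrg : r ≠ g) (hrb : r ≠ b) (hgb : g ≠ b)
    (hdisj : ∀ v, emb v ≠ r ∧ emb v ≠ g ∧ emb v ≠ b)
    (μ : Vtx → C) (hμcol : ∀ v, μ v = r ∨ μ v = g ∨ μ v = b)
    (hμ : ∀ u v, E u v → μ u ≠ μ v) :
    ¬ Q1 (Jsol E emb r g b μ) ∧ ¬ Q2 (Jsol E emb r g b μ) :=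
  query_false_on_coloring_solution_general E emb hemb r g b μ hμcol hμ
end

section
/- Conversely, if a graph G does not admit a proper 3-coloring, then for every supported solution J of I_G w.r.t. the setting S of the 3-colorability reduction, the Boolean query Q = Q1 ∨ Q2 evaluates to true on J; hence the supported certain answers to Q over I_G are nonempty (contain the empty tuple). -/
namespace ThreeCol

open DE

variable {Vtx C : Type} {E : Vtx → Vtx → Prop} {emb : Vtx → C} {r g b : C}

section Semantics

variable {γ : ExChoice GRel C} {I : Instance GRel C}

theorem satTGDcoh_rho1_iff :
    satTGDcoh I γ (rho1 C) ↔ ∀ x : C, (⟨GRel.Col, [Term.const x]⟩ : Fact GRel C) ∈ I →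
      (⟨GRel.ColT, [Term.const x]⟩ : Fact GRel C) ∈ I := by
  simp only [satTGDcoh, rho1, holdsBody, List.forall_mem_singleton, applyAtom, List.map, termOf,
    constHom, List.not_mem_nil, IsEmpty.forall_iff, implies_true, forall_const]
  exact ⟨fun h x => h fun _ => x, fun h f => h (f 0)⟩

theorem satTGDcoh_rho2_iff :
    satTGDcoh I γ (rho2 C) ↔ ∀ x y : C,
      (⟨GRel.Es, [Term.const x, Term.const y]⟩ : Fact GRel C) ∈ I →
        (⟨GRel.Et, [Term.const x, Term.const y]⟩ : Fact GRel C) ∈ I := by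
  simp only [satTGDcoh, rho2, holdsBody, List.forall_mem_singleton, applyAtom, List.map, termOf,
    constHom, List.not_mem_nil, IsEmpty.forall_iff, implies_true, forall_const]
  exact ⟨fun h x y => h fun n => if n = 0 then x else y, fun h f => h (f 0) (f 1)⟩

theorem satTGDcoh_rho3_iff :
    satTGDcoh I γ (rho3 C) ↔ ∀ x : C, (⟨GRel.V, [Term.const x]⟩ : Fact GRel C) ∈ I →
      (⟨GRel.HasC, [Term.const x, Term.const (γ (rho3 C) [x] 1)]⟩ : Fact GRel C) ∈ I := by
  -- Unfolded piece by piece so that `rho3` stays folded under `γ`.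
  have hbody : ∀ f : Var → C, holdsBody I (constHom f) (rho3 C).body ↔
      (⟨GRel.V, [Term.const (f 0)]⟩ : Fact GRel C) ∈ I := by
    simp [holdsBody, rho3, applyAtom, termOf, constHom]
  have hhead : ∀ f : Var → C, holdsBody I (constHom f) (rho3 C).head ↔
      (⟨GRel.HasC, [Term.const (f 0), Term.const (f 1)]⟩ : Fact GRel C) ∈ I := by
    simp [holdsBody, rho3, applyAtom, termOf, constHom]
  have hcoh : ∀ f : Var → C,
      (∀ z ∈ (rho3 C).exvars, f z = γ (rho3 C) ((rho3 C).frontier.map f) z) ↔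
        f 1 = γ (rho3 C) [f 0] 1 := by
    simp [rho3]
  simp only [satTGDcoh, hbody, hhead, hcoh]
  refine ⟨fun h x => h (fun n => if n = 0 then x else γ (rho3 C) [x] 1) rfl, ?_⟩
  intro h f hf
  rw [hf]
  exact h (f 0)

theorem supportedWith_setting_iff {J : Instance GRel C} :
    supportedWith (setting C) γ I J ↔ satTGDcoh (I ∪ J) γ (rho1 C) ∧
      satTGDcoh (I ∪ J) γ (rho2 C) ∧ satTGDcoh (I ∪ J) γ (rho3 C) := by
  simp [supportedWith, setting]

end Semantics

def choiceColoring (γ : ExChoice GRel C) (emb : Vtx → C) (v : Vtx) : C :=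
  γ (rho3 C) [emb v] 1

theorem Jsol_choiceColoring_subset {γ : ExChoice GRel C} {J : Instance GRel C}
    (hJ : supportedWith (setting C) γ (IG E emb r g b) J) :
    Jsol E emb r g b (choiceColoring γ emb) ⊆ J := by
  rw [supportedWith_setting_iff, satTGDcoh_rho1_iff, satTGDcoh_rho2_iff,
    satTGDcoh_rho3_iff] at hJ
  obtain ⟨hCol, hEs, hV⟩ := hJ
  rintro f (⟨v, rfl⟩ | ⟨u, v, huv, rfl⟩ | rfl | rfl | rfl)
  · simpa [IG, choiceColoring] using hV (emb v) (by simp [IG])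
  · simpa [IG] using hEs (emb u) (emb v) (by simpa [IG] using Or.inl ⟨u, v, huv, rfl, rfl⟩)
  all_goals simpa [IG] using hCol _ (by simp [IG])

theorem supportedWith_Jsol_choiceColoring (γ : ExChoice GRel C) :
    supportedWith (setting C) γ (IG E emb r g b) (Jsol E emb r g b (choiceColoring γ emb)) := by
  rw [supportedWith_setting_iff, satTGDcoh_rho1_iff, satTGDcoh_rho2_iff, satTGDcoh_rho3_iff]
  refine ⟨by simp [IG, Jsol], by simp [IG, Jsol], ?_⟩
  simpa [IG, Jsol, choiceColoring] using fun v => ⟨v, rfl, rfl⟩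

theorem exists_eq_Jsol_of_supportedSolution {J : Instance GRel C}
    (hJ : supportedSolution (setting C) (IG E emb r g b) J) :
    ∃ μ : Vtx → C, J = Jsol E emb r g b μ := by
  obtain ⟨-, γ, hsupp, hmin⟩ := hJ
  refine ⟨choiceColoring γ emb, of_not_not fun hne => ?_⟩
  exact hmin _ ((Jsol_choiceColoring_subset hsupp).ssubset_of_ne (Ne.symm hne))
    (supportedWith_Jsol_choiceColoring γ)

theorem Q1_Jsol_of_ne {μ : Vtx → C} (v : Vtx) (hv : ¬ (μ v = r ∨ μ v = g ∨ μ v = b)) :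
    Q1 (Jsol E emb r g b μ) := by
  refine ⟨Term.const (emb v), Term.const (μ v), by simpa [Jsol] using ⟨v, rfl, rfl⟩, ?_⟩
  simpa [Jsol] using hv

theorem Q2_Jsol_of_adj_of_eq {μ : Vtx → C} {u v : Vtx} (huv : E u v) (hμ : μ u = μ v) :
    Q2 (Jsol E emb r g b μ) := by
  refine ⟨Term.const (emb u), Term.const (emb v), Term.const (μ u), ?_, ?_, ?_⟩
  · simpa [Jsol] using ⟨u, v, huv, rfl, rfl⟩
  · simpa [Jsol] using ⟨u, rfl, rfl⟩
  · simpa [Jsol] using ⟨v, rfl, hμ⟩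

end ThreeCol

open ThreeCol in
theorem query_true_on_all_supported_solutions_general {Vtx C : Type}
    (E : Vtx → Vtx → Prop) (emb : Vtx → C) (r g b : C)
    (hnc : ¬ ∃ μ : Vtx → C, (∀ v, μ v = r ∨ μ v = g ∨ μ v = b) ∧
        ∀ u v, E u v → μ u ≠ μ v) :
    ∀ J : DE.Instance GRel C,
      DE.supportedSolution (setting C) (IG E emb r g b) J → Q1 J ∨ Q2 J := by
  intro J hJ
  obtain ⟨μ, rfl⟩ := exists_eq_Jsol_of_supportedSolution hJ
  by_cases hcol : ∀ v, μ v = r ∨ μ v = g ∨ μ v = b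
  · obtain ⟨u, v, huv, hμ⟩ : ∃ u v, E u v ∧ μ u = μ v := by
      by_contra! h
      exact hnc ⟨μ, hcol, h⟩
    exact Or.inr (Q2_Jsol_of_adj_of_eq huv hμ)
  · obtain ⟨v, hv⟩ := not_forall.mp hcol
    exact Or.inl (Q1_Jsol_of_ne v hv)

open ThreeCol in
/-- if `G` is not 3-colorable then the query `Q = Q1 ∨ Q2` is true
on every supported solution of `I_G`; hence the empty tuple is a supported
certain answer to the Boolean query `Q`. -/
theorem query_true_on_all_supported_solutions {Vtx C : Type} [Fintype Vtx]
    (E : Vtx → Vtx → Prop) (emb : Vtx → C) (hemb : Function.Injective emb)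
    (r g b : C) (hrg : r ≠ g) (hrb : r ≠ b) (hgb : g ≠ b)
    (hdisj : ∀ v, emb v ≠ r ∧ emb v ≠ g ∧ emb v ≠ b)
    (hnc : ¬ ∃ μ : Vtx → C, (∀ v, μ v = r ∨ μ v = g ∨ μ v = b) ∧
        ∀ u v, E u v → μ u ≠ μ v) :
    ∀ J : DE.Instance GRel C,
      DE.supportedSolution (setting C) (IG E emb r g b) J → Q1 J ∨ Q2 J :=
  query_true_on_all_supported_solutions_general E emb r g b hnc
end
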